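/- Define a word a₁...aₙ (1 ≤ aᵢ ≤ 2i−1) to be arc-disconnected if there exists k ≥ 2 with a_k = 2k−1 and a_j ≥ 2k−1 for all j > k. Then the number of arc-connected words of length n satisfies the recursion aₙ = (2n−1)!! − Σ_{k=1}^{n−1} (2k−1)!! · a_{n−k}, where a word is arc-connected if it is not arc-disconnected. -/

import Mathlib

/-!
Call a (0-indexed) position `k` of a word `w` a cut if `w k = 2k+1` and every later letter is
at least `2k+1`. Position `0` is a cut of every word, and a word is arc-disconnected exactly when
it has a cut at a nonzero position. Sorting the words of length `n` by their last cut `k`, the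
word splits at `k` into an arbitrary word of length `k` and, after subtracting `2k` from the
remaining letters, a connected word of length `n - k` whose last cut is `0`. Hence
`(2n-1)‼ = ∑_{k<n} (2k-1)‼ aₙ₋ₖ`, whose `k = 0` term is `aₙ`.
-/

/-- A word `w : Fin n → ℕ` (with `1 ≤ w i ≤ 2i+1` for the 0-indexed `i`,
i.e. `1 ≤ a_k ≤ 2k-1` for 1-indexed `k = i+1`) is arc-disconnected if there is
a 1-indexed position `k ≥ 2` with `a_k = 2k-1` and `a_j ≥ 2k-1` for all
`j > k`. -/
def ArcDisconnectedF (n : ℕ) (w : Fin n → ℕ) : Prop :=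
  ∃ k : Fin n, 2 ≤ (k:ℕ) + 1 ∧ w k = 2*((k:ℕ) + 1) - 1 ∧
    ∀ j : Fin n, k < j → 2*((k:ℕ) + 1) - 1 ≤ w j

/-- The number of arc-connected words of length `n`. -/
noncomputable def connCount (n : ℕ) : ℕ :=
  {w : Fin n → ℕ | (∀ i, 1 ≤ w i ∧ w i ≤ 2*(i:ℕ) + 1) ∧
    ¬ ArcDisconnectedF n w}.ncard

lemma Fin.castAdd_lt_natAdd {k m : ℕ} (i : Fin k) (j : Fin m) :
    Fin.castAdd m i < Fin.natAdd k j := by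
  simp only [Fin.lt_def, Fin.val_castAdd, Fin.val_natAdd]
  omega

open Finset Nat
open scoped Classical

namespace ArcWord

def boundedWords (n : ℕ) : Finset (Fin n → ℕ) :=
  Fintype.piFinset fun i => Icc 1 (2 * (i : ℕ) + 1)

noncomputable def connectedWords (n : ℕ) : Finset (Fin n → ℕ) :=
  {w ∈ boundedWords n | ¬ ArcDisconnectedF n w}

def IsCut {n : ℕ} (w : Fin n → ℕ) (k : Fin n) : Prop :=
  w k = 2 * k + 1 ∧ ∀ j, k < j → 2 * (k : ℕ) + 1 ≤ w j

def IsLastCut {n : ℕ} (w : Fin n → ℕ) (k : Fin n) : Prop :=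
  IsCut w k ∧ ∀ j, k < j → ¬ IsCut w j

noncomputable def lastCutAt (n k : ℕ) : Finset (Fin n → ℕ) :=
  {w ∈ boundedWords n | ∃ h : k < n, IsLastCut w ⟨k, h⟩}

def concat {k m : ℕ} (u : Fin k → ℕ) (v : Fin m → ℕ) : Fin (k + m) → ℕ :=
  Fin.append u fun j => v j + 2 * k

variable {n k m : ℕ}

lemma mem_boundedWords {w : Fin n → ℕ} :
    w ∈ boundedWords n ↔ ∀ i, 1 ≤ w i ∧ w i ≤ 2 * (i : ℕ) + 1 := by
  simp [boundedWords]

lemma prod_odd_eq_doubleFactorial (n : ℕ) :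
    ∏ i : Fin n, (2 * (i : ℕ) + 1) = (2 * n - 1)‼ := by
  induction n with
  | zero => rfl
  | succ n ih =>
    rw [Fin.prod_univ_castSucc, show 2 * (n + 1) - 1 = 2 * n + 1 by omega,
      doubleFactorial_add_one]
    simp only [Fin.val_castSucc, Fin.val_last, ih]
    ring

lemma card_boundedWords (n : ℕ) : #(boundedWords n) = (2 * n - 1)‼ := by
  simp [boundedWords, Fintype.card_piFinset, prod_odd_eq_doubleFactorial]

lemma arcDisconnectedF_iff {w : Fin n → ℕ} :
    ArcDisconnectedF n w ↔ ∃ k : Fin n, (k : ℕ) ≠ 0 ∧ IsCut w k := by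
  unfold ArcDisconnectedF IsCut
  refine exists_congr fun k => ?_
  constructor <;> rintro ⟨h1, h2, h3⟩ <;>
    exact ⟨by omega, by omega, fun j hj => by have := h3 j hj; omega⟩

lemma connCount_eq_card (n : ℕ) : connCount n = #(connectedWords n) := by
  rw [connCount, ← Set.ncard_coe_finset]
  congr 1
  ext w
  simp [connectedWords, mem_boundedWords]

lemma isCut_zero {w : Fin (m + 1) → ℕ} (hw : w ∈ boundedWords (m + 1)) : IsCut w 0 := by
  rw [mem_boundedWords] at hw
  refine ⟨?_, fun j _ => (hw j).1⟩
  have := hw 0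
  simp only [Fin.val_zero] at this ⊢
  omega

lemma IsLastCut.eq {w : Fin n → ℕ} {i j : Fin n} (hi : IsLastCut w i) (hj : IsLastCut w j) :
    i = j := by
  by_contra hne
  rcases lt_or_gt_of_ne hne with h | h
  · exact hi.2 j h hj.1
  · exact hj.2 i h hi.1

lemma exists_isLastCut {w : Fin n → ℕ} {i : Fin n} (hi : IsCut w i) : ∃ k, IsLastCut w k := by
  obtain ⟨k, hk, hmax⟩ :=
    ({j | IsCut w j} : Finset (Fin n)).exists_max_image id ⟨i, by simpa⟩
  exact ⟨k, (mem_filter.mp hk).2, fun j hkj hj => (hmax j (by simpa)).not_gt hkj⟩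

lemma mem_connectedWords {w : Fin (m + 1) → ℕ} :
    w ∈ connectedWords (m + 1) ↔ w ∈ boundedWords (m + 1) ∧ IsLastCut w 0 := by
  simp only [connectedWords, mem_filter, arcDisconnectedF_iff, IsLastCut, not_exists, not_and]
  constructor
  · rintro ⟨hw, hconn⟩
    exact ⟨hw, isCut_zero hw, fun j hj =>
      hconn j (Fin.val_ne_of_ne (Fin.pos_iff_ne_zero.mp hj))⟩
  · rintro ⟨hw, -, hconn⟩
    exact ⟨hw, fun j hj => hconn j (Fin.pos_iff_ne_zero.mpr fun h => hj (by simp [h]))⟩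

@[simp] lemma concat_castAdd (u : Fin k → ℕ) (v : Fin m → ℕ) (i : Fin k) :
    concat u v (Fin.castAdd m i) = u i := Fin.append_left ..

@[simp] lemma concat_natAdd (u : Fin k → ℕ) (v : Fin m → ℕ) (j : Fin m) :
    concat u v (Fin.natAdd k j) = v j + 2 * k := Fin.append_right ..

lemma concat_injective :
    Function.Injective fun p : (Fin k → ℕ) × (Fin m → ℕ) => concat p.1 p.2 := by
  rintro ⟨u, v⟩ ⟨u', v'⟩ h
  simp only at h
  ext i
  · simpa using congrFun h (Fin.castAdd m i)
  · simpa using congrFun h (Fin.natAdd k i)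

lemma concat_mem_boundedWords_iff {u : Fin k → ℕ} {v : Fin m → ℕ} :
    concat u v ∈ boundedWords (k + m) ↔
      u ∈ boundedWords k ∧ ∀ j, 1 ≤ v j + 2 * k ∧ v j ≤ 2 * (j : ℕ) + 1 := by
  simp only [mem_boundedWords, Fin.forall_fin_add, concat_castAdd, concat_natAdd,
    Fin.val_castAdd, Fin.val_natAdd]
  refine and_congr_right fun _ => forall_congr' fun j => ?_
  omega

lemma isCut_concat_natAdd_iff (u : Fin k → ℕ) (v : Fin m → ℕ) (j : Fin m) :
    IsCut (concat u v) (Fin.natAdd k j) ↔ IsCut v j := by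
  simp only [IsCut, Fin.forall_fin_add, concat_castAdd, concat_natAdd, Fin.val_natAdd,
    Fin.natAdd_lt_natAdd_iff, (Fin.castAdd_lt_natAdd _ j).asymm, IsEmpty.forall_iff,
    implies_true, true_and]
  refine and_congr (by omega) (forall₂_congr fun _ _ => by omega)

lemma isLastCut_concat_natAdd_iff (u : Fin k → ℕ) (v : Fin m → ℕ) (j : Fin m) :
    IsLastCut (concat u v) (Fin.natAdd k j) ↔ IsLastCut v j := by
  simp only [IsLastCut, Fin.forall_fin_add, isCut_concat_natAdd_iff, Fin.natAdd_lt_natAdd_iff,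
    (Fin.castAdd_lt_natAdd _ j).asymm, IsEmpty.forall_iff, implies_true, true_and]

lemma concat_split {w : Fin (k + m) → ℕ} (hw : ∀ j, 2 * k ≤ w (Fin.natAdd k j)) :
    concat (fun i => w (Fin.castAdd m i)) (fun j => w (Fin.natAdd k j) - 2 * k) = w := by
  conv_rhs => rw [← Fin.append_castAdd_natAdd (f := w)]
  unfold concat
  congr
  funext j
  have := hw j
  dsimp only
  omega

lemma lastCutAt_eq_image (k m : ℕ) :
    lastCutAt (k + (m + 1)) k =
      (boundedWords k ×ˢ connectedWords (m + 1)).image fun p => concat p.1 p.2 := by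
  ext w
  have hpos : (⟨k, by omega⟩ : Fin (k + (m + 1))) = Fin.natAdd k 0 := rfl
  simp only [lastCutAt, mem_filter, mem_image, mem_product, Prod.exists, hpos,
    exists_prop_of_true (show k < k + (m + 1) by omega)]
  constructor
  · rintro ⟨hw, hlast⟩
    have hcut := hlast.1
    simp only [IsCut, Fin.val_natAdd, Fin.val_zero, add_zero] at hcut
    have hsuffix : ∀ j, 2 * k + 1 ≤ w (Fin.natAdd k j) :=
      Fin.cases hcut.1.ge fun j => hcut.2 _ ((Fin.natAdd_lt_natAdd_iff k).mpr j.succ_pos)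
    rw [← concat_split fun j => Nat.le_of_succ_le (hsuffix j)] at hw hlast ⊢
    obtain ⟨hu, hv⟩ := concat_mem_boundedWords_iff.mp hw
    rw [isLastCut_concat_natAdd_iff] at hlast
    refine ⟨_, _, ⟨hu, mem_connectedWords.mpr
      ⟨mem_boundedWords.mpr fun j => ⟨?_, (hv j).2⟩, hlast⟩⟩, rfl⟩
    have := hsuffix j
    omega
  · rintro ⟨u, v, ⟨hu, hv⟩, rfl⟩
    rw [mem_connectedWords] at hv
    refine ⟨concat_mem_boundedWords_iff.mpr ⟨hu, fun j => ?_⟩,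
      (isLastCut_concat_natAdd_iff ..).mpr hv.2⟩
    have := mem_boundedWords.mp hv.1 j
    omega

lemma card_lastCutAt (hk : k < n) :
    #(lastCutAt n k) = #(boundedWords k) * #(connectedWords (n - k)) := by
  obtain ⟨m, rfl⟩ : ∃ m, n = k + (m + 1) := ⟨n - k - 1, by omega⟩
  rw [lastCutAt_eq_image, card_image_of_injective _ concat_injective, card_product,
    Nat.add_sub_cancel_left]

lemma boundedWords_eq_biUnion (hn : 0 < n) :
    boundedWords n = (range n).biUnion (lastCutAt n) := by
  ext w
  simp only [mem_biUnion, mem_range, lastCutAt, mem_filter]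
  constructor
  · intro hw
    obtain ⟨m, rfl⟩ : ∃ m, n = m + 1 := ⟨n - 1, by omega⟩
    obtain ⟨k, hk⟩ := exists_isLastCut (isCut_zero hw)
    exact ⟨k, k.isLt, hw, k.isLt, hk⟩
  · rintro ⟨-, -, hw, -⟩
    exact hw

lemma pairwiseDisjoint_lastCutAt (n : ℕ) :
    (range n : Set ℕ).PairwiseDisjoint (lastCutAt n) := by
  intro i _ j _ hij
  refine disjoint_left.mpr fun w hi hj => hij ?_
  obtain ⟨-, _, hwi⟩ := mem_filter.mp hi
  obtain ⟨-, _, hwj⟩ := mem_filter.mp hj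
  exact congrArg Fin.val (hwi.eq hwj)

theorem doubleFactorial_eq_sum_connCount (hn : 0 < n) :
    (2 * n - 1)‼ = ∑ k ∈ range n, (2 * k - 1)‼ * connCount (n - k) := by
  rw [← card_boundedWords, boundedWords_eq_biUnion hn,
    card_biUnion (pairwiseDisjoint_lastCutAt n)]
  refine sum_congr rfl fun k hk => ?_
  rw [card_lastCutAt (mem_range.mp hk), card_boundedWords, connCount_eq_card]

lemma connCount_zero : connCount 0 = 1 := by
  simp [connCount, ArcDisconnectedF]

end ArcWord

theorem stmt_9 (n : ℕ) :
    connCount n =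
      Nat.doubleFactorial (2*n - 1) -
        ∑ k ∈ Finset.Icc 1 (n-1), Nat.doubleFactorial (2*k - 1) * connCount (n - k) := by
  rcases n.eq_zero_or_pos with rfl | hn
  · simp [ArcWord.connCount_zero]
  · rw [ArcWord.doubleFactorial_eq_sum_connCount hn, range_eq_Ico, sum_eq_sum_Ico_succ_bot hn,
      Icc_sub_one_right_eq_Ico_of_not_isMin (by simpa using hn.ne')]
    simp
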